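/- Let v₀ ∈ 𝓕Ḣ^{1/2} ∩ H¹ and θ ∈ ℝ. Suppose φ ∈ 𝓕Ḣ^{1/2} ∩ H¹ is a real-valued eigenfunction of the Schrödinger operator −Δ − 2Re(e^{iθ}v₀) with negative eigenvalue ẽ < 0. Set u₀ = c·e^{−iθ/2}φ with c² = ‖∇v₀‖_{L²}²/(2|ẽ|‖φ‖_{L²}²). Then E[u₀, v₀] = 0. -/

import Mathlib

open MeasureTheory Complex
noncomputable section

abbrev E3 := EuclideanSpace ℝ (Fin 3)

/-- Energy `E[u,v] = ∫ (|∇u|² + ½|∇v|² − 2 Re(u² conj v))`. -/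
def energy (u v : E3 → ℂ) : ℝ :=
  ∫ x : E3, (‖fderiv ℝ u x‖ ^ 2 + (1 / 2) * ‖fderiv ℝ v x‖ ^ 2
      - 2 * ((u x) ^ 2 * (starRingEnd ℂ) (v x)).re)

/-- The Laplacian on ℝ³, as the sum of repeated directional derivatives. -/
def lap (f : E3 → ℝ) (x : E3) : ℝ :=
  ∑ i : Fin 3,
    fderiv ℝ (fun y => fderiv ℝ f y (EuclideanSpace.single i 1)) x
      (EuclideanSpace.single i 1)

/-!
The phase `e^{−iθ/2}` is chosen so that `u₀² conj v₀` has real part `c² Re(e^{iθ} v₀) φ²`.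
Hence `E[u₀, v₀] = c² (‖∇φ‖² − 2 ∫ Re(e^{iθ} v₀) φ²) + ½ ‖∇v₀‖²`, and pairing the eigenvalue
equation with `φ` identifies the bracket with `ẽ ‖φ‖²`. The choice of `c` makes
`c² ẽ ‖φ‖² = −½ ‖∇v₀‖²`.
-/

open scoped ComplexConjugate

theorem norm_fderiv_const_mul {E : Type*} [NormedAddCommGroup E] [NormedSpace ℝ E]
    (k : ℂ) (f : E → ℂ) (x : E) :
    ‖fderiv ℝ (fun y => k * f y) x‖ = ‖k‖ * ‖fderiv ℝ f x‖ := by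
  change ‖fderiv ℝ (k • f) x‖ = _
  rw [fderiv_const_smul_field, Pi.smul_apply, norm_smul]

theorem norm_fderiv_ofReal_comp {E : Type*} [NormedAddCommGroup E] [NormedSpace ℝ E]
    (φ : E → ℝ) (x : E) :
    ‖fderiv ℝ (fun y => (φ y : ℂ)) x‖ = ‖fderiv ℝ φ x‖ := by
  by_cases h : DifferentiableAt ℝ φ x
  · change ‖fderiv ℝ (ofRealLI.toContinuousLinearMap ∘ φ) x‖ = _
    rw [(ofRealLI.toContinuousLinearMap.hasFDerivAt.comp x h.hasFDerivAt).fderiv,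
      ofRealLI.norm_toContinuousLinearMap_comp]
  · have h' : ¬ DifferentiableAt ℝ (fun y => (φ y : ℂ)) x := fun hd =>
      h (reCLM.differentiableAt.comp x hd)
    rw [fderiv_zero_of_not_differentiableAt h, fderiv_zero_of_not_differentiableAt h', norm_zero,
      norm_zero]

theorem exp_neg_half_mul_I_sq (θ : ℝ) :
    exp (-((θ / 2 : ℝ) : ℂ) * I) ^ 2 = conj (exp (θ * I)) := by
  rw [← exp_conj, sq, ← exp_add]
  congr 1
  simp only [map_mul, conj_ofReal, conj_I]
  push_cast
  ring

theorem re_sq_mul_conj_of_exp_neg_half (c p θ : ℝ) (v : ℂ) :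
    ((c * exp (-((θ / 2 : ℝ) : ℂ) * I) * p) ^ 2 * conj v).re
      = c ^ 2 * ((exp (θ * I) * v).re * p ^ 2) := by
  have : (c * exp (-((θ / 2 : ℝ) : ℂ) * I) * p) ^ 2 * conj v
      = ((c ^ 2 * p ^ 2 : ℝ) : ℂ) * conj (exp (θ * I) * v) := by
    rw [map_mul, ← exp_neg_half_mul_I_sq]
    push_cast
    ring
  rw [this, re_ofReal_mul, conj_re]
  ring

theorem energy_real_mul_exp_neg_half_mul (c θ : ℝ) (φ : E3 → ℝ) (v : E3 → ℂ)
    (hφ : Integrable (fun x => ‖fderiv ℝ φ x‖ ^ 2))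
    (hv : Integrable (fun x => ‖fderiv ℝ v x‖ ^ 2))
    (hcross : Integrable (fun x => (exp (θ * I) * v x).re * φ x ^ 2)) :
    energy (fun x => c * exp (-((θ / 2 : ℝ) : ℂ) * I) * φ x) v
      = c ^ 2 * ((∫ x, ‖fderiv ℝ φ x‖ ^ 2) - 2 * ∫ x, (exp (θ * I) * v x).re * φ x ^ 2)
        + 1 / 2 * ∫ x, ‖fderiv ℝ v x‖ ^ 2 := by
  have hnorm : ‖(c : ℂ) * exp (-((θ / 2 : ℝ) : ℂ) * I)‖ ^ 2 = c ^ 2 := by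
    simp [norm_exp, sq_abs]
  have hpt : ∀ x, ‖fderiv ℝ (fun y => c * exp (-((θ / 2 : ℝ) : ℂ) * I) * φ y) x‖ ^ 2
        + 1 / 2 * ‖fderiv ℝ v x‖ ^ 2
        - 2 * ((c * exp (-((θ / 2 : ℝ) : ℂ) * I) * φ x) ^ 2 * conj (v x)).re
      = c ^ 2 * (‖fderiv ℝ φ x‖ ^ 2 - 2 * ((exp (θ * I) * v x).re * φ x ^ 2))
        + 1 / 2 * ‖fderiv ℝ v x‖ ^ 2 := fun x => by
    rw [norm_fderiv_const_mul, norm_fderiv_ofReal_comp, mul_pow, hnorm,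
      re_sq_mul_conj_of_exp_neg_half]
    ring
  have hbracket : Integrable
      (fun x => ‖fderiv ℝ φ x‖ ^ 2 - 2 * ((exp (θ * I) * v x).re * φ x ^ 2)) :=
    hφ.sub (hcross.const_mul 2)
  rw [energy, integral_congr_ae (Filter.Eventually.of_forall hpt),
    integral_add (hbracket.const_mul _) (hv.const_mul _), integral_const_mul, integral_const_mul,
    integral_sub hφ (hcross.const_mul 2), integral_const_mul]

theorem integral_norm_fderiv_sq_sub_eq_of_eigen (φ W : E3 → ℝ) (e : ℝ)
    (heig : ∀ x, -lap φ x - 2 * W x * φ x = e * φ x)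
    (hIBP : (∫ x, -lap φ x * φ x) = ∫ x, ‖fderiv ℝ φ x‖ ^ 2)
    (hlap : Integrable (fun x => lap φ x * φ x))
    (hW : Integrable (fun x => W x * φ x ^ 2)) :
    (∫ x, ‖fderiv ℝ φ x‖ ^ 2) - 2 * ∫ x, W x * φ x ^ 2 = e * ∫ x, φ x ^ 2 := by
  have hpt : ∀ x, -lap φ x * φ x - 2 * (W x * φ x ^ 2) = e * φ x ^ 2 := fun x => by
    linear_combination φ x * heig x
  rw [← hIBP, ← integral_const_mul, ← integral_const_mul,
    ← integral_sub (by simpa only [neg_mul] using hlap.fun_neg) (hW.const_mul 2)]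
  exact integral_congr_ae (Filter.Eventually.of_forall hpt)

theorem stmt12_general (v₀ : E3 → ℂ) (θ ee : ℝ) (φ : E3 → ℝ) (hee : ee < 0)
    (heig : ∀ x, -lap φ x - 2 * (Complex.exp ((θ : ℂ) * Complex.I) * v₀ x).re * φ x
      = ee * φ x)
    (hIBP : (∫ x : E3, -(lap φ x) * φ x) = ∫ x : E3, ‖fderiv ℝ φ x‖ ^ 2)
    (hφL2 : 0 < ∫ x : E3, (φ x) ^ 2)
    (higφ : Integrable (fun x : E3 => ‖fderiv ℝ φ x‖ ^ 2))
    (higv : Integrable (fun x : E3 => ‖fderiv ℝ v₀ x‖ ^ 2))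
    (hilap : Integrable (fun x : E3 => lap φ x * φ x))
    (hicross : Integrable
      (fun x : E3 => (Complex.exp ((θ : ℂ) * Complex.I) * v₀ x).re * (φ x) ^ 2)) :
    energy
      (fun x =>
        ((Real.sqrt ((∫ y : E3, ‖fderiv ℝ v₀ y‖ ^ 2) / (2 * |ee| * ∫ y : E3, (φ y) ^ 2)) : ℝ) : ℂ)
          * Complex.exp (-((θ / 2 : ℝ) : ℂ) * Complex.I) * ((φ x : ℝ) : ℂ))
      v₀ = 0 := by
  rw [energy_real_mul_exp_neg_half_mul _ θ φ v₀ higφ higv hicross,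
    integral_norm_fderiv_sq_sub_eq_of_eigen φ _ ee heig hIBP hilap hicross]
  set D := ∫ y : E3, ‖fderiv ℝ v₀ y‖ ^ 2
  set P := ∫ y : E3, (φ y) ^ 2
  have hc : Real.sqrt (D / (2 * |ee| * P)) ^ 2 = D / (2 * |ee| * P) :=
    Real.sq_sqrt (div_nonneg (integral_nonneg fun x => by positivity) (by positivity))
  rw [hc, abs_of_neg hee]
  field_simp [hee.ne, hφL2.ne']
  ring

/-- if `φ` is a real-valued eigenfunction of `−Δ − 2Re(e^{iθ}v₀)` with
negative eigenvalue `ẽ < 0`, and `u₀ = c e^{−iθ/2}φ` with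
`c² = ‖∇v₀‖²_{L²}/(2|ẽ|‖φ‖²_{L²})`, then `E[u₀, v₀] = 0`. -/
theorem stmt12 (v₀ : E3 → ℂ) (θ ee : ℝ) (φ : E3 → ℝ) (hee : ee < 0)
    (heig : ∀ x, -lap φ x - 2 * (Complex.exp ((θ : ℂ) * Complex.I) * v₀ x).re * φ x
      = ee * φ x)
    (hIBP : (∫ x : E3, -(lap φ x) * φ x) = ∫ x : E3, ‖fderiv ℝ φ x‖ ^ 2)
    (hφL2 : 0 < ∫ x : E3, (φ x) ^ 2)
    (hiφ : Integrable (fun x : E3 => (φ x) ^ 2))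
    (higφ : Integrable (fun x : E3 => ‖fderiv ℝ φ x‖ ^ 2))
    (higv : Integrable (fun x : E3 => ‖fderiv ℝ v₀ x‖ ^ 2))
    (hilap : Integrable (fun x : E3 => lap φ x * φ x))
    (hicross : Integrable
      (fun x : E3 => (Complex.exp ((θ : ℂ) * Complex.I) * v₀ x).re * (φ x) ^ 2)) :
    energy
      (fun x =>
        ((Real.sqrt ((∫ y : E3, ‖fderiv ℝ v₀ y‖ ^ 2) / (2 * |ee| * ∫ y : E3, (φ y) ^ 2)) : ℝ) : ℂ)
          * Complex.exp (-((θ / 2 : ℝ) : ℂ) * Complex.I) * ((φ x : ℝ) : ℂ))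
      v₀ = 0 :=
  stmt12_general v₀ θ ee φ hee heig hIBP hφL2 higφ higv hilap hicross
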